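/- The map sending x₁x₂…x_ℓ to its reversal x_ℓ…x₂x₁ is an isomorphism from the cyclic Kautz digraph CK(d,ℓ) to its converse digraph. -/

import Mathlib

/-- Consecutive entries are distinct. -/
abbrev consecNe {m n : ℕ} (x : Fin m → Fin n) : Prop :=
  ∀ i j : Fin m, j.val = i.val + 1 → x i ≠ x j

/-- First entry distinct from last entry. -/
abbrev firstNeLast {m n : ℕ} (x : Fin m → Fin n) : Prop :=
  ∀ i j : Fin m, i.val = 0 → j.val = m - 1 → x i ≠ x j

/-- Adjacency in the cyclic Kautz digraph `CK(d,ℓ)`: `y` is the left shift of `x` with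
a new last symbol distinct from `x₂` and from `x_ℓ`. -/
abbrev ckAdj {m n : ℕ} (x y : Fin m → Fin n) : Prop :=
  (∀ i j : Fin m, j.val = i.val + 1 → y i = x j) ∧
  (∀ i j : Fin m, i.val = m - 1 → j.val = 1 → y i ≠ x j) ∧
  (∀ i : Fin m, i.val = m - 1 → y i ≠ x i)

/-- The reversal map `Ψ(x₁x₂…x_ℓ) = x_ℓ…x₂x₁`. -/
def rev {m n : ℕ} (x : Fin m → Fin n) : Fin m → Fin n :=
  fun i => x ⟨m - 1 - i.val, by have := i.isLt; omega⟩

/-!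
Reversal is `x ↦ x ∘ Fin.rev`, an involution that preserves the vertex conditions. Reversing
an arc `x₁…x_ℓ → x₂…x_ℓ y` gives `y x_ℓ…x₂ → x_ℓ…x₁`, again a shift; the two conditions on
its new symbol `x₁` are `x₁ ≠ x_ℓ` and `x₁ ≠ x₂`, which hold because `x` is a vertex. Being an
involution, reversal then also reflects arcs.
-/

section CyclicKautz

variable {m n : ℕ}

lemma rev_eq_comp_finRev (x : Fin m → Fin n) : rev x = x ∘ Fin.rev := by
  funext i
  simp only [rev, Function.comp_apply]
  congr 1
  ext
  simp only [Fin.val_rev]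
  omega

lemma rev_involutive : Function.Involutive (rev : (Fin m → Fin n) → Fin m → Fin n) := by
  intro x
  rw [rev_eq_comp_finRev, rev_eq_comp_finRev, Function.comp_assoc, Fin.rev_involutive.comp_self,
    Function.comp_id]

lemma consecNe.rev {x : Fin m → Fin n} (hx : consecNe x) : consecNe (rev x) := by
  intro i j hij
  rw [rev_eq_comp_finRev]
  exact (hx j.rev i.rev (by simp only [Fin.val_rev]; omega)).symm

lemma firstNeLast.rev {x : Fin m → Fin n} (hx : firstNeLast x) : firstNeLast (rev x) := by
  intro i j hi hj
  rw [rev_eq_comp_finRev]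
  exact (hx j.rev i.rev (by simp only [Fin.val_rev]; omega)
    (by simp only [Fin.val_rev]; omega)).symm

lemma firstNeLast.two_le {x : Fin m → Fin n} (hx : firstNeLast x) (i : Fin m) : 2 ≤ m := by
  by_contra! hm
  exact hx i i (by omega) (by omega) rfl

lemma ckAdj.rev {x y : Fin m → Fin n} (hx : consecNe x ∧ firstNeLast x) (hxy : ckAdj x y) :
    ckAdj (rev y) (rev x) := by
  obtain ⟨hshift, -, -⟩ := hxy
  rw [rev_eq_comp_finRev, rev_eq_comp_finRev]
  refine ⟨fun i j hij => (hshift j.rev i.rev (by simp only [Fin.val_rev]; omega)).symm,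
    fun i j hi hj => ?_, fun i hi => ?_⟩
  · have hm := hx.2.two_le i
    rw [Function.comp_apply, Function.comp_apply,
      hshift j.rev ⟨m - 1, by omega⟩ (by simp only [Fin.val_rev]; omega)]
    exact hx.2 i.rev _ (by simp only [Fin.val_rev]; omega) rfl
  · have hm := hx.2.two_le i
    rw [Function.comp_apply, Function.comp_apply,
      hshift i.rev ⟨1, by omega⟩ (by simp only [Fin.val_rev]; omega)]
    exact hx.1 i.rev _ (by simp only [Fin.val_rev]; omega)

lemma ckAdj_rev_rev_iff {x y : Fin m → Fin n} (hx : consecNe x ∧ firstNeLast x)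
    (hy : consecNe y ∧ firstNeLast y) : ckAdj (rev y) (rev x) ↔ ckAdj x y := by
  refine ⟨fun h => ?_, ckAdj.rev hx⟩
  simpa only [rev_involutive _] using h.rev ⟨hy.1.rev, hy.2.rev⟩

end CyclicKautz

theorem stmt7 (d ℓ : ℕ) :
    (∀ x : Fin ℓ → Fin (d + 1), consecNe x ∧ firstNeLast x →
      consecNe (rev x) ∧ firstNeLast (rev x)) ∧
    Set.BijOn (rev (m := ℓ) (n := d + 1))
      {x | consecNe x ∧ firstNeLast x} {x | consecNe x ∧ firstNeLast x} ∧
    (∀ x y : Fin ℓ → Fin (d + 1), consecNe x ∧ firstNeLast x →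
      consecNe y ∧ firstNeLast y → (ckAdj x y ↔ ckAdj (rev y) (rev x))) := by
  have rev_vertex (x : Fin ℓ → Fin (d + 1)) (hx : consecNe x ∧ firstNeLast x) :
      consecNe (rev x) ∧ firstNeLast (rev x) := ⟨hx.1.rev, hx.2.rev⟩
  refine ⟨rev_vertex, ?_, fun x y hx hy => (ckAdj_rev_rev_iff hx hy).symm⟩
  exact Set.InvOn.bijOn ⟨fun x _ => rev_involutive x, fun x _ => rev_involutive x⟩
    rev_vertex rev_vertex
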